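/- For n = 2, every preference profile satisfying m-MaxProp also satisfies SPC, and the inclusion is strict (there is an SPC profile with only 2 proposals in men-proposing DA). -/

import Mathlib

open scoped Classical

noncomputable section

/-- A two-sided matching market with `n` men and `n` women, each with a complete
strict preference order over the other side. `mpref m k` is man `m`'s `k`-th
favourite woman (0 = top), and `wpref w k` is woman `w`'s `k`-th favourite man. -/
structure Profile (n : ℕ) where
  mpref : Fin n → (Fin n ≃ Fin n)
  wpref : Fin n → (Fin n ≃ Fin n)

namespace Profile

variable {n : ℕ}

/-- rank (0 = best) of woman `w` in man `m`'s preference list -/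
def mrank (P : Profile n) (m w : Fin n) : ℕ := ((P.mpref m).symm w : ℕ)

/-- rank (0 = best) of man `m` in woman `w`'s preference list -/
def wrank (P : Profile n) (w m : Fin n) : ℕ := ((P.wpref w).symm m : ℕ)

/-- man `m` strictly prefers woman `w` to woman `w'` -/
def mPrefers (P : Profile n) (m w w' : Fin n) : Prop := P.mrank m w < P.mrank m w'

/-- woman `w` strictly prefers man `m` to man `m'` -/
def wPrefers (P : Profile n) (w m m' : Fin n) : Prop := P.wrank w m < P.wrank w m'

/-- top choice of man `m` -/
def topM (P : Profile n) (m : Fin n) : Fin n := P.mpref m ⟨0, m.pos⟩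

/-- top choice of woman `w` -/
def topW (P : Profile n) (w : Fin n) : Fin n := P.wpref w ⟨0, w.pos⟩

/-- the profile with the roles of men and women exchanged -/
def swap (P : Profile n) : Profile n := ⟨P.wpref, P.mpref⟩

/-- State of the men-proposing deferred acceptance algorithm:
`next m` = number of proposals man `m` has made so far,
`held w` = the man woman `w` currently tentatively holds (if any). -/
structure DAState (n : ℕ) where
  next : Fin n → ℕ
  held : Fin n → Option (Fin n)

def initState (n : ℕ) : DAState n := ⟨fun _ => 0, fun _ => none⟩

/-- the men currently unmatched (held by no woman) -/
def unmatched (s : DAState n) : Finset (Fin n) :=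
  Finset.univ.filter fun m => ∀ w : Fin n, s.held w ≠ some m

/-- the woman man `m` proposes to next: his most preferred woman among those
who have not rejected him yet -/
def target (P : Profile n) (s : DAState n) (m : Fin n) : Fin n :=
  P.mpref m ⟨s.next m % n, Nat.mod_lt _ m.pos⟩

/-- the men proposing to woman `w` in the current round -/
def proposers (P : Profile n) (s : DAState n) (w : Fin n) : Finset (Fin n) :=
  (unmatched s).filter fun m => target P s m = w

/-- one round of the men-proposing deferred acceptance algorithm: every
unmatched man proposes to his favourite woman who has not rejected him yet,
and every woman tentatively holds her favourite among her current partner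
and the new proposers, rejecting the rest -/
def step (P : Profile n) (s : DAState n) : DAState n where
  next := fun m => if m ∈ unmatched s then s.next m + 1 else s.next m
  held := fun w => ((proposers P s w ∪ (s.held w).toFinset).toList).argmin (P.wrank w)

/-- the state after `k` rounds of men-proposing deferred acceptance -/
def stateAt (P : Profile n) (k : ℕ) : DAState n := (step P)^[k] (initState n)

/-- the final state of men-proposing deferred acceptance
(`n * n + 1` iterations is always enough to reach the fixed point) -/
def finalState (P : Profile n) : DAState n := stateAt P (n * n + 1)

/-- total number of proposals made during the men-proposing DA -/
def totalProposals (P : Profile n) : ℕ := ∑ m : Fin n, (finalState P).next m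

/-- number of rounds of the men-proposing DA (rounds in which some proposal is made) -/
def rounds (P : Profile n) : ℕ :=
  ((Finset.range (n * n + 1)).filter fun k => (unmatched (stateAt P k)).Nonempty).card

/-- total number of proposals received by woman `w` during the men-proposing DA -/
def proposalsTo (P : Profile n) (w : Fin n) : ℕ :=
  ∑ k ∈ Finset.range (n * n + 1), (proposers P (stateAt P k) w).card

/-- man `m` proposes to woman `w` at some point during the men-proposing DA -/
def proposedTo (P : Profile n) (m w : Fin n) : Prop :=
  ∃ k < n * n + 1, m ∈ proposers P (stateAt P k) w

/-- the men-proposing DA makes the maximum possible number `n² - n + 1` of proposals -/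
def MaxProp (P : Profile n) : Prop := P.totalProposals = n * n + 1 - n

/-- the men-proposing DA takes the maximum possible number `n² - 2n + 2` of rounds -/
def MaxRou (P : Profile n) : Prop := P.rounds = n * n + 2 - 2 * n

/-- a matching (a bijection man ↦ woman) is stable iff no man-woman pair mutually
prefer each other to their assigned partners -/
def Stable (P : Profile n) (μ : Fin n ≃ Fin n) : Prop :=
  ¬ ∃ (m w : Fin n), P.mPrefers m w (μ m) ∧ P.wPrefers w m (μ.symm w)

/-- the profile admits a unique stable matching -/
def USM (P : Profile n) : Prop := ∃! μ : Fin n ≃ Fin n, P.Stable μ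

/-- the sequential preference condition of Eeckhout (2000) -/
def SPC (P : Profile n) : Prop :=
  ∃ σ τ : Equiv.Perm (Fin n), ∀ i j : Fin n, i < j →
    P.mPrefers (σ i) (τ i) (τ j) ∧ P.wPrefers (τ i) (σ i) (σ j)

/-- the no crossing condition of Clark (2006) -/
def NCC (P : Profile n) : Prop :=
  ∃ σ τ : Equiv.Perm (Fin n), ∀ i j k l : Fin n, i < j → k < l →
    (P.mPrefers (σ i) (τ l) (τ k) → P.mPrefers (σ j) (τ l) (τ k)) ∧
    (P.wPrefers (τ k) (σ j) (σ i) → P.wPrefers (τ l) (σ j) (σ i))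

end Profile

/-!
If the men's top choices are pairwise distinct, every man is held after the first round
of men-proposing deferred acceptance, so the algorithm stops with only `n` proposals.
Hence m-MaxProp forces two men to share a top choice `w`, and for `n = 2` that means
every man ranks `w` first, so `w` and her favourite man rank each other first; such a
mutually top-ranked pair, listed first, is an SPC ordering.
-/

namespace Profile

open Function Finset

variable {n : ℕ}

lemma mPrefers_topM (P : Profile n) {m w : Fin n} (hw : w ≠ P.topM m) :
    P.mPrefers m (P.topM m) w := by
  rw [mPrefers, mrank, topM, Equiv.symm_apply_apply, Nat.pos_iff_ne_zero]
  intro h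
  exact hw ((Equiv.symm_apply_eq _).mp (Fin.ext h))

lemma wPrefers_topW (P : Profile n) {w m : Fin n} (hm : m ≠ P.topW w) :
    P.wPrefers w (P.topW w) m :=
  P.swap.mPrefers_topM hm

section DeferredAcceptance

variable (P : Profile n)

lemma unmatched_initState : unmatched (initState n) = univ := by
  ext m
  simp [unmatched, initState]

lemma mem_proposers_initState {m w : Fin n} :
    m ∈ proposers P (initState n) w ↔ P.topM m = w := by
  rw [proposers, mem_filter, unmatched_initState]
  simp [target, topM, initState]

lemma next_step_initState (m : Fin n) : (step P (initState n)).next m = 1 := by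
  simp only [step, unmatched_initState, mem_univ, if_true]
  rfl

lemma held_step_initState_topM (h : Injective P.topM) (m : Fin n) :
    (step P (initState n)).held (P.topM m) = some m := by
  have hprop : proposers P (initState n) (P.topM m) = {m} := by
    ext m'
    simp [mem_proposers_initState, h.eq_iff]
  simp only [step, hprop]
  simp [initState]

lemma unmatched_step_initState (h : Injective P.topM) :
    unmatched (step P (initState n)) = ∅ := by
  ext m
  simpa [unmatched] using ⟨P.topM m, held_step_initState_topM P h m⟩

lemma step_eq_self_of_unmatched_eq_empty {s : DAState n} (hs : unmatched s = ∅) :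
    step P s = s := by
  obtain ⟨next, held⟩ := s
  have hprop (w : Fin n) : proposers P ⟨next, held⟩ w = ∅ := by simp [proposers, hs]
  simp only [step, hs, hprop, notMem_empty, if_false, empty_union, DAState.mk.injEq,
    true_and]
  funext w
  cases held w <;> simp

theorem totalProposals_of_injective_topM (h : Injective P.topM) : P.totalProposals = n := by
  have hfix : step P (step P (initState n)) = step P (initState n) :=
    step_eq_self_of_unmatched_eq_empty P (unmatched_step_initState P h)
  have hfinal : finalState P = step P (initState n) := by
    rw [finalState, stateAt, iterate_succ_apply, iterate_fixed hfix]
  simp [totalProposals, hfinal, next_step_initState]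

theorem MaxProp.not_injective_topM {P : Profile n} (hn : 2 ≤ n) (hP : P.MaxProp) :
    ¬ Injective P.topM := fun h => by
  have hsq : 2 * n ≤ n * n := Nat.mul_le_mul_right n hn
  have := P.totalProposals_of_injective_topM h
  rw [MaxProp] at hP
  omega

end DeferredAcceptance

lemma spc_of_topM_eq_of_topW_eq (P : Profile 2) {m w : Fin 2} (hm : P.topM m = w)
    (hw : P.topW w = m) : P.SPC := by
  refine ⟨Equiv.swap 0 m, Equiv.swap 0 w, fun i j hij => ?_⟩
  obtain ⟨rfl, rfl⟩ : i = 0 ∧ j = 1 := by revert i j; decide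
  have hswap (a : Fin 2) : Equiv.swap 0 a 1 ≠ a := by revert a; decide
  rw [Equiv.swap_apply_left, Equiv.swap_apply_left]
  constructor
  · subst hm; exact P.mPrefers_topM (hswap _)
  · subst hw; exact P.wPrefers_topW (hswap _)

lemma spc_of_not_injective_topM (P : Profile 2) (h : ¬ Injective P.topM) : P.SPC := by
  unfold Injective at h
  push Not at h
  obtain ⟨a, b, hab, hne⟩ := h
  have hcover : ∀ a b m : Fin 2, a ≠ b → m = a ∨ m = b := by decide
  have htop (m : Fin 2) : P.topM m = P.topM a := by
    rcases hcover a b m hne with rfl | rfl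
    · rfl
    · exact hab.symm
  exact P.spc_of_topM_eq_of_topW_eq (htop _) rfl

end Profile

/-- For `n = 2`, m-MaxProp implies SPC, and the inclusion is strict: there is
an SPC profile on which the men-proposing DA makes only 2 proposals. -/
theorem maxProp_subset_spc_two :
    (∀ P : Profile 2, P.MaxProp → P.SPC) ∧
    (∃ P : Profile 2, P.SPC ∧ P.totalProposals = 2) := by
  constructor
  · intro P hP
    exact P.spc_of_not_injective_topM (hP.not_injective_topM le_rfl)
  · let P : Profile 2 := ⟨fun m => Equiv.swap 0 m, fun w => Equiv.swap 0 w⟩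
    have htop : P.topM = id := by decide
    refine ⟨P, P.spc_of_topM_eq_of_topW_eq (m := 0) (w := 0) rfl rfl, ?_⟩
    exact P.totalProposals_of_injective_topM (htop ▸ Function.injective_id)
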